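/- For words w, w' in the stuffle algebra H^0 whose associated CMSPL series converge ∞-adically (i.e. whose generators z_{s,u} satisfy |u|_∞ < q^{sq/(q-1)} in the first position and ≤ elsewhere as in the domain D^{Conv}), the values satisfy Li*(w ⋆ w') = Li*(w) · Li*(w') in C_∞. -/

import Mathlib

/-!
Truncating all series at depth `n`, the recursion defining `⋆` is the decomposition of a
product `(∑_{i ≤ n} a_i) (∑_{j ≤ n} b_j)` into the parts `i ≥ j`, `j ≥ i` and `i = j`,
so `Li*^{≤n}` is multiplicative for every `n`. The letters of a word of `w ⋆ w'` are
letters of `w`, of `w'`, or merged letters `(s + t, u v)`, and the bound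
`q^{sq/(q-1)} = c^s` with `c = q^{q/(q-1)}` is multiplicative in `s`; hence every word of
`w ⋆ w'` lies in `D^Conv` again, and the identity passes to the limit `n → ∞`.
-/

/-- Stuffle product of words (letters are pairs `(s,u)`), valued in the free
`F`-module on words. -/
noncomputable def stuffleW {F : Type*} [Field F] :
    List (ℕ × F) → List (ℕ × F) → (List (ℕ × F) →₀ F)
  | [], w => Finsupp.single w 1
  | x :: w, [] => Finsupp.single (x :: w) 1
  | x :: w, y :: w' =>
      Finsupp.mapDomain (fun l => x :: l) (stuffleW w (y :: w')) +
      Finsupp.mapDomain (fun l => y :: l) (stuffleW (x :: w) w') -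
      Finsupp.mapDomain (fun l => (x.1 + y.1, x.2 * y.2) :: l) (stuffleW w w')
  termination_by w w' => w.length + w'.length

/-- Truncated star polylogarithm `Li*^{≤n}` on words. -/
noncomputable def liTrunc {F : Type*} [Field F] (q : ℕ) (Lval : ℕ → F) :
    ℕ → List (ℕ × F) → F
  | _, [] => 1
  | n, (s, u) :: w =>
      ∑ i ∈ Finset.range (n + 1), u ^ q ^ i / (Lval i) ^ s * liTrunc q Lval i w
  termination_by n w => w.length

/-- A word lies in the ∞-adic convergence domain `D^Conv`: all letters `(s,u)` have
`s ≥ 1` and `|u|_∞ ≤ q^{sq/(q-1)}`, with strict inequality for the first letter. -/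
def ConvWord (q : ℕ) {F : Type*} [NormedField F] (w : List (ℕ × F)) : Prop :=
  (∀ p ∈ w, 1 ≤ p.1) ∧
  (∀ p ∈ w, ‖p.2‖ ≤ (q : ℝ) ^ (((p.1 * q : ℕ) : ℝ) / ((q : ℝ) - 1))) ∧
  (∀ p : ℕ × F, w.head? = some p →
    ‖p.2‖ < (q : ℝ) ^ (((p.1 * q : ℕ) : ℝ) / ((q : ℝ) - 1)))

open Finset

lemma sum_range_mul_sum_range_eq_add_sub_diag {R : Type*} [CommRing R] (n : ℕ) (f g : ℕ → R) :
    (∑ i ∈ range (n + 1), f i) * (∑ j ∈ range (n + 1), g j)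
      = (∑ i ∈ range (n + 1), f i * ∑ j ∈ range (i + 1), g j)
      + (∑ j ∈ range (n + 1), g j * ∑ i ∈ range (j + 1), f i)
      - ∑ i ∈ range (n + 1), f i * g i := by
  induction n with
  | zero => simp only [zero_add, sum_range_one]; ring
  | succ n ih =>
    rw [sum_range_succ f (n + 1), sum_range_succ g (n + 1),
      sum_range_succ (fun i => f i * ∑ j ∈ range (i + 1), g j) (n + 1),
      sum_range_succ (fun j => g j * ∑ i ∈ range (j + 1), f i) (n + 1),
      sum_range_succ (fun i => f i * g i) (n + 1), sum_range_succ g (n + 1),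
      sum_range_succ f (n + 1)]
    linear_combination ih

section Truncated

variable {F : Type*} [Field F] (q : ℕ) (Lval : ℕ → F)

lemma liTrunc_nil (n : ℕ) : liTrunc q Lval n [] = 1 := by
  rw [liTrunc]

lemma liTrunc_cons (n s : ℕ) (u : F) (w : List (ℕ × F)) :
    liTrunc q Lval n ((s, u) :: w)
      = ∑ i ∈ range (n + 1), u ^ q ^ i / Lval i ^ s * liTrunc q Lval i w := by
  rw [liTrunc]

lemma linearCombination_liTrunc_cons (n s : ℕ) (u : F) (S : List (ℕ × F) →₀ F) :
    Finsupp.linearCombination F (fun l => liTrunc q Lval n ((s, u) :: l)) S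
      = ∑ i ∈ range (n + 1),
          u ^ q ^ i / Lval i ^ s * Finsupp.linearCombination F (liTrunc q Lval i) S := by
  simp only [Finsupp.linearCombination_apply, Finsupp.sum, liTrunc_cons, mul_sum, smul_eq_mul]
  rw [sum_comm]
  exact sum_congr rfl fun i _ => sum_congr rfl fun l _ => by ring

theorem linearCombination_liTrunc_stuffleW (w w' : List (ℕ × F)) (n : ℕ) :
    Finsupp.linearCombination F (liTrunc q Lval n) (stuffleW w w')
      = liTrunc q Lval n w * liTrunc q Lval n w' := by
  induction w, w' using stuffleW.induct generalizing n with
  | case1 w => rw [stuffleW]; simp [liTrunc_nil]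
  | case2 x w => rw [stuffleW]; simp [liTrunc_nil]
  | case3 x w y w' ih₁ ih₂ ih₃ =>
    obtain ⟨s, u⟩ := x
    obtain ⟨t, v⟩ := y
    rw [stuffleW]
    simp only [map_add, map_sub, Finsupp.linearCombination_mapDomain, Function.comp_def,
      linearCombination_liTrunc_cons, ih₁, ih₂, ih₃]
    rw [liTrunc_cons q Lval n s u w, liTrunc_cons q Lval n t v w',
      sum_range_mul_sum_range_eq_add_sub_diag]
    congr 1
    congr 1
    · exact sum_congr rfl fun i _ => by rw [liTrunc_cons]; ring
    · exact sum_congr rfl fun j _ => by rw [liTrunc_cons]; ring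
    · exact sum_congr rfl fun i _ => by rw [mul_pow, pow_add]; ring

end Truncated

section Support

variable {F : Type*} [Field F]

lemma support_stuffleW_nil_left (w : List (ℕ × F)) : (stuffleW [] w).support ⊆ {w} := by
  rw [stuffleW]
  exact Finsupp.support_single_subset

lemma support_stuffleW_nil_right (w : List (ℕ × F)) : (stuffleW w []).support ⊆ {w} := by
  cases w <;> rw [stuffleW] <;> exact Finsupp.support_single_subset

lemma mem_support_stuffleW_cons_cons {x y : ℕ × F} {w w' l : List (ℕ × F)}
    (hl : l ∈ (stuffleW (x :: w) (y :: w')).support) :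
    (∃ l' ∈ (stuffleW w (y :: w')).support, l = x :: l') ∨
      (∃ l' ∈ (stuffleW (x :: w) w').support, l = y :: l') ∨
      ∃ l' ∈ (stuffleW w w').support, l = (x.1 + y.1, x.2 * y.2) :: l' := by
  classical
  rw [stuffleW] at hl
  rcases mem_union.1 (Finsupp.support_sub hl) with hl | hl
  · rcases mem_union.1 (Finsupp.support_add hl) with hl | hl
    · exact .inl (by simpa [eq_comm] using Finsupp.mapDomain_support hl)
    · exact .inr (.inl (by simpa [eq_comm] using Finsupp.mapDomain_support hl))
  · exact .inr (.inr (by simpa [eq_comm] using Finsupp.mapDomain_support hl))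

variable (P : ℕ × F → Prop)

theorem forall_mem_of_mem_support_stuffleW (hP : ∀ x y, P x → P y → P (x.1 + y.1, x.2 * y.2))
    {w w' : List (ℕ × F)}
    (hw : ∀ p ∈ w, P p) (hw' : ∀ p ∈ w', P p) :
    ∀ l ∈ (stuffleW w w').support, ∀ p ∈ l, P p := by
  induction w, w' using stuffleW.induct with
  | case1 w => intro l hl; rwa [mem_singleton.1 (support_stuffleW_nil_left w hl)]
  | case2 x w => intro l hl; rwa [mem_singleton.1 (support_stuffleW_nil_right _ hl)]
  | case3 x w y w' ih₁ ih₂ ih₃ =>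
    simp only [List.forall_mem_cons] at hw hw'
    intro l hl
    rcases mem_support_stuffleW_cons_cons hl with
      ⟨l', hl', rfl⟩ | ⟨l', hl', rfl⟩ | ⟨l', hl', rfl⟩
    · exact List.forall_mem_cons.2 ⟨hw.1, ih₁ hw.2 (List.forall_mem_cons.2 hw') l' hl'⟩
    · exact List.forall_mem_cons.2 ⟨hw'.1, ih₂ (List.forall_mem_cons.2 hw) hw'.2 l' hl'⟩
    · exact List.forall_mem_cons.2 ⟨hP _ _ hw.1 hw'.1, ih₃ hw.2 hw'.2 l' hl'⟩

theorem head_of_mem_support_stuffleW (hP : ∀ x y, P x → P y → P (x.1 + y.1, x.2 * y.2))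
    {w w' : List (ℕ × F)}
    (hw : ∀ p, w.head? = some p → P p) (hw' : ∀ p, w'.head? = some p → P p) :
    ∀ l ∈ (stuffleW w w').support, ∀ p, l.head? = some p → P p := by
  intro l hl
  match w, w' with
  | [], w' => rwa [mem_singleton.1 (support_stuffleW_nil_left w' hl)]
  | x :: w, [] => rwa [mem_singleton.1 (support_stuffleW_nil_right _ hl)]
  | x :: w, y :: w' =>
    have hx := hw x rfl
    have hy := hw' y rfl
    rcases mem_support_stuffleW_cons_cons hl with
      ⟨l', -, rfl⟩ | ⟨l', -, rfl⟩ | ⟨l', -, rfl⟩ <;> rintro p ⟨⟩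
    exacts [hx, hy, hP _ _ hx hy]

end Support

section Convergence

variable {F : Type*} [NormedField F]

noncomputable def convBase (q : ℕ) : ℝ := (q : ℝ) ^ ((q : ℝ) / ((q : ℝ) - 1))

lemma rpow_mul_div_sub_one_eq_convBase_pow (q s : ℕ) :
    (q : ℝ) ^ (((s * q : ℕ) : ℝ) / ((q : ℝ) - 1)) = convBase q ^ s := by
  rw [convBase, ← Real.rpow_natCast, ← Real.rpow_mul (Nat.cast_nonneg q)]
  congr 1
  push_cast
  ring

lemma convWord_iff (q : ℕ) (w : List (ℕ × F)) :
    ConvWord q w ↔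
      (∀ p ∈ w, 1 ≤ p.1 ∧ ‖p.2‖ ≤ convBase q ^ p.1) ∧
        ∀ p, w.head? = some p → ‖p.2‖ < convBase q ^ p.1 := by
  simp only [ConvWord, rpow_mul_div_sub_one_eq_convBase_pow, forall_and, and_assoc]

theorem convWord_of_mem_support_stuffleW {q : ℕ} {w w' : List (ℕ × F)}
    (hw : ConvWord q w) (hw' : ConvWord q w') :
    ∀ l ∈ (stuffleW w w').support, ConvWord q l := by
  rw [convWord_iff] at hw hw'
  intro l hl
  rw [convWord_iff]
  constructor
  · refine forall_mem_of_mem_support_stuffleW _ ?_ hw.1 hw'.1 l hl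
    rintro x y ⟨hx₁, hx₂⟩ ⟨hy₁, hy₂⟩
    refine ⟨hx₁.trans (Nat.le_add_right _ _), ?_⟩
    rw [norm_mul, pow_add]
    exact mul_le_mul hx₂ hy₂ (norm_nonneg _) ((norm_nonneg _).trans hx₂)
  · refine head_of_mem_support_stuffleW _ ?_ hw.2 hw'.2 l hl
    intro x y hx hy
    rw [norm_mul, pow_add]
    exact mul_lt_mul'' hx hy (norm_nonneg _) (norm_nonneg _)

end Convergence

theorem stmt_8_general (q : ℕ)
    (F : Type*) [NormedField F]
    (Lval : ℕ → F)
    (LiS : List (ℕ × F) → F)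
    (hLiS : ∀ w : List (ℕ × F), ConvWord q w →
      Filter.Tendsto (fun n => liTrunc q Lval n w) Filter.atTop (nhds (LiS w)))
    (w w' : List (ℕ × F)) (hw : ConvWord q w) (hw' : ConvWord q w') :
    ((stuffleW w w').sum fun w'' a => a * LiS w'') = LiS w * LiS w' := by
  refine tendsto_nhds_unique ?_ ((hLiS w hw).mul (hLiS w' hw'))
  simp_rw [← linearCombination_liTrunc_stuffleW, Finsupp.linearCombination_apply, smul_eq_mul]
  exact tendsto_finsetSum _ fun l hl =>
    (hLiS l (convWord_of_mem_support_stuffleW hw hw' l hl)).const_mul _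

/-- for words `w, w'` in the stuffle algebra whose CMSPL series converge
∞-adically (domain `D^Conv`), the values `Li*(w) := lim_n Li*^{≤n}(w)` satisfy
`Li*(w ⋆ w') = Li*(w)·Li*(w')` in `C_∞`. -/
theorem stmt_8 (q : ℕ) (hq : 2 ≤ q)
    (F : Type*) [NormedField F] [CompleteSpace F]
    (hna : IsNonarchimedean (norm : F → ℝ))
    (Lval : ℕ → F) (hL0 : ∀ i, Lval i ≠ 0)
    (hLnorm : ∀ i : ℕ,
      ‖Lval i‖ = (q : ℝ) ^ ((((q : ℝ) ^ (i + 1) - (q : ℝ)) / ((q : ℝ) - 1))))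
    (LiS : List (ℕ × F) → F)
    (hLiS : ∀ w : List (ℕ × F), ConvWord q w →
      Filter.Tendsto (fun n => liTrunc q Lval n w) Filter.atTop (nhds (LiS w)))
    (w w' : List (ℕ × F)) (hw : ConvWord q w) (hw' : ConvWord q w') :
    ((stuffleW w w').sum fun w'' a => a * LiS w'') = LiS w * LiS w' :=
  stmt_8_general q F Lval LiS hLiS w w' hw hw'
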